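/- Let G be a connected r-regular graph on n vertices with λ < 1, and consider the BIPS process on G with source v and parameter k = 2. Then for every set A ⊆ V with v ∈ A and every t ≥ 0, E(|A_{t+1}| | A_t = A) ≥ |A|·(1 + (1 − λ²)·(1 − |A|/n)). -/

import Mathlib

open Finset

noncomputable section

variable {V : Type*}

/-- The random-walk transition matrix `P = A(G)/r` of a graph `G`. -/
def transMatrix [Fintype V] (G : SimpleGraph V) [DecidableRel G.Adj] (r : ℕ) :
    Matrix V V ℝ :=
  Matrix.of fun x y => if G.Adj x y then (r : ℝ)⁻¹ else 0

/-- `λ = max_{i ≥ 2} |λ_i|`: the largest absolute value of an eigenvalue of the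
transition matrix on the space orthogonal to the constant vectors.  For a connected
regular graph this is exactly the second largest eigenvalue in absolute value. -/
def secondEigen [Fintype V] (G : SimpleGraph V) [DecidableRel G.Adj] (r : ℕ) : ℝ :=
  sSup {y : ℝ | ∃ (μ : ℝ) (f : V → ℝ), y = |μ| ∧ f ≠ 0 ∧ (∑ x, f x) = 0 ∧
    (transMatrix G r).mulVec f = μ • f}

/-- `d_A(x) = |N(x) ∩ A|`. -/
def degIn [Fintype V] [DecidableEq V] (G : SimpleGraph V) [DecidableRel G.Adj]
    (A : Finset V) (x : V) : ℕ :=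
  (G.neighborFinset x ∩ A).card

/-- Probability that a vertex `u` choosing `k` uniform random neighbours (with
replacement) in an `r`-regular graph hits the set `A` at least once. -/
def pInf [Fintype V] [DecidableEq V] (G : SimpleGraph V) [DecidableRel G.Adj]
    (r k : ℕ) (A : Finset V) (u : V) : ℝ :=
  1 - (1 - (degIn G A u : ℝ) / (r : ℝ)) ^ k

/-- One-step transition probability of the BIPS process with source `v` and parameter `k`:
each `u ≠ v` is independently infected with probability `pInf`, and `v` is always infected. -/
def bipsStep [Fintype V] [DecidableEq V] (G : SimpleGraph V) [DecidableRel G.Adj]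
    (r k : ℕ) (v : V) (A B : Finset V) : ℝ :=
  if v ∈ B then
    ∏ u ∈ Finset.univ.erase v, (if u ∈ B then pInf G r k A u else 1 - pInf G r k A u)
  else 0

/-- Marginal distribution at time `t` of the Markov chain with one-step transition
probabilities `step` started at `A₀`. -/
def chainProb [Fintype V] [DecidableEq V] (step : Finset V → Finset V → ℝ)
    (A₀ : Finset V) : ℕ → Finset V → ℝ
  | 0, B => if B = A₀ then 1 else 0
  | (t+1), B => ∑ A : Finset V, chainProb step A₀ t A * step A B

/-- Probability of the trajectory `ω 0, ω 1, …, ω T` for the Markov chain with one-step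
transition probabilities `step` started at `A₀`. -/
def trajProb [DecidableEq V] (step : Finset V → Finset V → ℝ) (A₀ : Finset V) (T : ℕ)
    (ω : Fin (T+1) → Finset V) : ℝ :=
  (if ω 0 = A₀ then (1:ℝ) else 0) * ∏ i : Fin T, step (ω i.castSucc) (ω i.succ)

open scoped Classical in
/-- Probability that the trajectory `(A_0, …, A_T)` of the chain satisfies `Q`. -/
def trajPr [Fintype V] [DecidableEq V] (step : Finset V → Finset V → ℝ)
    (A₀ : Finset V) (T : ℕ) (Q : (Fin (T+1) → Finset V) → Prop) : ℝ :=
  ∑ ω : Fin (T+1) → Finset V, if Q ω then trajProb step A₀ T ω else 0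

open scoped Classical in
/-- One-step transition probability of the COBRA process with branching factor `k`:
every vertex of `C` chooses `k` neighbours independently and uniformly at random with
replacement, and `B` is the set of all chosen vertices. -/
def cobraStep [Fintype V] [DecidableEq V] (G : SimpleGraph V) [DecidableRel G.Adj]
    (k : ℕ) (C B : Finset V) : ℝ :=
  ∑ f : ↥C → Fin k → V,
    if (∀ x : ↥C, ∀ i : Fin k, G.Adj (x : V) (f x i)) ∧
        B = Finset.image (fun p : ↥C × Fin k => f p.1 p.2) Finset.univ then
      ∏ x : ↥C, ((G.degree (x : V) : ℝ)⁻¹) ^ k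
    else 0

/-- `Pr(cov(u) > T)`: probability that after `T` rounds of the COBRA process started at
`C_0 = {u}` the sets `C_1, …, C_T` have not yet covered all vertices. -/
def prCovGT [Fintype V] [DecidableEq V] (G : SimpleGraph V) [DecidableRel G.Adj]
    (k : ℕ) (u : V) (T : ℕ) : ℝ :=
  trajPr (cobraStep G k) {u} T (fun ω => ∃ x : V, ∀ s : Fin (T+1), s ≠ 0 → x ∉ ω s)

/-- `Pr(infec(v) > T)`: probability that after `T` rounds of the BIPS process with
source `v` (started from `A_0 = {v}`) the infected set is not yet the whole vertex set. -/
def prInfecGT [Fintype V] [DecidableEq V] (G : SimpleGraph V) [DecidableRel G.Adj]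
    (r k : ℕ) (v : V) (T : ℕ) : ℝ :=
  trajPr (bipsStep G r k v) {v} T (fun ω => ∀ s : Fin (T+1), ω s ≠ Finset.univ)

/-- Probability that a vertex `u` hits `A` when it chooses one uniform random neighbour,
and then with probability `ρ` a second (independent, uniform) neighbour. -/
def pInfRho [Fintype V] [DecidableEq V] (G : SimpleGraph V) [DecidableRel G.Adj]
    (r : ℕ) (ρ : ℝ) (A : Finset V) (u : V) : ℝ :=
  1 - (1 - (degIn G A u : ℝ) / (r : ℝ)) * (1 - ρ * (degIn G A u : ℝ) / (r : ℝ))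

/-- One-step transition probability of the BIPS process with expected branching factor
`1 + ρ` and source `v`. -/
def bipsRhoStep [Fintype V] [DecidableEq V] (G : SimpleGraph V) [DecidableRel G.Adj]
    (r : ℕ) (ρ : ℝ) (v : V) (A B : Finset V) : ℝ :=
  if v ∈ B then
    ∏ u ∈ Finset.univ.erase v,
      (if u ∈ B then pInfRho G r ρ A u else 1 - pInfRho G r ρ A u)
  else 0

open scoped Classical in
/-- One-step transition probability of the COBRA process with expected branching factor
`1 + ρ`: each vertex of `C` chooses one uniform random neighbour and, independently with
probability `ρ`, a second uniform random neighbour; `B` is the set of all chosen vertices. -/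
def cobraRhoStep [Fintype V] [DecidableEq V] (G : SimpleGraph V) [DecidableRel G.Adj]
    (ρ : ℝ) (C B : Finset V) : ℝ :=
  ∑ f : ↥C → V, ∑ g : ↥C → Option V,
    if (∀ x : ↥C, G.Adj (x : V) (f x)) ∧
        (∀ x : ↥C, ∀ y : V, g x = some y → G.Adj (x : V) y) ∧
        B = Finset.image f Finset.univ ∪
          Finset.univ.biUnion (fun x : ↥C => (g x).toFinset) then
      ∏ x : ↥C, ((G.degree (x : V) : ℝ)⁻¹ *
        Option.elim (g x) (1 - ρ) (fun _ => ρ * (G.degree (x : V) : ℝ)⁻¹))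
    else 0

/-- `Pr(cov(u) > T)` for the COBRA process with expected branching factor `1 + ρ`. -/
def prCovRhoGT [Fintype V] [DecidableEq V] (G : SimpleGraph V) [DecidableRel G.Adj]
    (ρ : ℝ) (u : V) (T : ℕ) : ℝ :=
  trajPr (cobraRhoStep G ρ) {u} T (fun ω => ∃ x : V, ∀ s : Fin (T+1), s ≠ 0 → x ∉ ω s)

end

/-!
Write `x_u = d_A(u) / r = (P 1_A)(u)`. With `k = 2` a vertex `u ≠ v` is infected with probability
`1 - (1 - x_u)² = 2 x_u - x_u²`, and the source with probability `1 ≥ 2 x_v - x_v²`, so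
`E|A_{t+1}| ≥ 2 ∑ x_u - ∑ x_u² = 2|A| - ‖P 1_A‖²`. As `P` is symmetric and doubly stochastic,
`P - J/n` (`J` the all-ones matrix) agrees with `P` on sum-zero vectors, and each of its
eigenvectors with a nonzero eigenvalue is sum-zero, so its eigenvalues lie in `[-λ, λ]`. Applied
to `1_A - |A|/n` this gives `‖P 1_A‖² - |A|²/n ≤ λ² (|A| - |A|²/n)`, which rearranges to the claim.
-/

open Finset Matrix Module End

section ProductWeights

variable {α R : Type*} [Fintype α] [DecidableEq α] [CommRing R]

theorem Fintype.sum_prod_ite_mem (a b : α → R) :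
    ∑ B : Finset α, ∏ x, (if x ∈ B then a x else b x) = ∏ x, (a x + b x) := by
  rw [Fintype.prod_add]
  refine Finset.sum_congr rfl fun B _ => ?_
  rw [prod_ite]
  congr 2 <;> ext <;> simp

theorem Fintype.sum_prod_ite_mem_mul_card (p : α → R) :
    ∑ B : Finset α, (∏ x, if x ∈ B then p x else 1 - p x) * (B.card : R) = ∑ x, p x := by
  have hweight : ∀ (B : Finset α) (u : α), (∏ x, if x ∈ B then p x else 1 - p x) *
      (if u ∈ B then 1 else 0) = ∏ x, if x ∈ B then p x else if x = u then 0 else 1 - p x := by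
    intro B u
    by_cases hu : u ∈ B
    · simp only [hu, if_true, mul_one]
      refine Finset.prod_congr rfl fun x _ => ?_
      split_ifs with hx hxu <;> simp_all
    · rw [if_neg hu, mul_zero, eq_comm]
      exact prod_eq_zero (mem_univ u) (by simp [hu])
  calc ∑ B : Finset α, (∏ x, if x ∈ B then p x else 1 - p x) * (B.card : R)
      = ∑ u, ∑ B : Finset α, ∏ x, if x ∈ B then p x else if x = u then 0 else 1 - p x := by
        rw [Finset.sum_comm]
        refine Finset.sum_congr rfl fun B _ => ?_
        simp [← hweight, mul_comm]
    _ = ∑ u, ∏ x, (p x + if x = u then 0 else 1 - p x) := by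
        simp only [Fintype.sum_prod_ite_mem]
    _ = ∑ x, p x := by
        refine Finset.sum_congr rfl fun u _ => ?_
        rw [Finset.prod_congr rfl fun x _ => (?_ : _ = if x = u then p u else 1), prod_ite_eq']
        split_ifs with h <;> simp [h]

end ProductWeights

theorem sum_sq_sub_sum_div_card {ι : Type*} [Fintype ι] (g : ι → ℝ) :
    ∑ i, (g i - (∑ j, g j) / Fintype.card ι) ^ 2 =
      ∑ i, g i ^ 2 - (∑ i, g i) ^ 2 / Fintype.card ι := by
  simp only [sub_sq, sum_add_distrib, sum_sub_distrib, ← sum_mul, ← mul_sum, sum_const, card_univ,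
    nsmul_eq_mul]
  rcases eq_or_ne (Fintype.card ι : ℝ) 0 with hn | hn
  · simp [hn]
  · field_simp
    ring

theorem LinearMap.IsSymmetric.norm_sq_apply_le {𝕜 E : Type*} [RCLike 𝕜] [NormedAddCommGroup E]
    [InnerProductSpace 𝕜 E] [FiniteDimensional 𝕜 E] {T : E →ₗ[𝕜] E} (hT : T.IsSymmetric)
    {c : ℝ} (hc : ∀ μ : 𝕜, HasEigenvalue T μ → ‖μ‖ ≤ c) (x : E) :
    ‖T x‖ ^ 2 ≤ c ^ 2 * ‖x‖ ^ 2 := by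
  set b := hT.eigenvectorBasis rfl
  have hcoord : ∀ i, ‖b.repr (T x) i‖ ^ 2 ≤ c ^ 2 * ‖b.repr x i‖ ^ 2 := by
    intro i
    rw [hT.eigenvectorBasis_apply_self_apply, norm_mul, mul_pow]
    gcongr
    exact hc _ (hT.hasEigenvalue_eigenvalues rfl i)
  calc ‖T x‖ ^ 2 = ∑ i, ‖b.repr (T x) i‖ ^ 2 := by
        rw [← EuclideanSpace.norm_sq_eq, b.repr.norm_map]
    _ ≤ ∑ i, c ^ 2 * ‖b.repr x i‖ ^ 2 := sum_le_sum fun i _ => hcoord i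
    _ = c ^ 2 * ‖x‖ ^ 2 := by
        rw [← mul_sum, ← EuclideanSpace.norm_sq_eq, b.repr.norm_map]

theorem Matrix.IsHermitian.sum_sq_mulVec_le {n : Type*} [Fintype n] [DecidableEq n]
    {M : Matrix n n ℝ} (hM : M.IsHermitian) {c : ℝ}
    (hc : ∀ (μ : ℝ) (f : n → ℝ), f ≠ 0 → M *ᵥ f = μ • f → |μ| ≤ c) (f : n → ℝ) :
    ∑ i, (M *ᵥ f) i ^ 2 ≤ c ^ 2 * ∑ i, f i ^ 2 := by
  have hT := isSymmetric_toEuclideanLin_iff.2 hM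
  have hcT : ∀ μ : ℝ, HasEigenvalue (toEuclideanLin M) μ → ‖μ‖ ≤ c := by
    intro μ hμ
    obtain ⟨g, hg_mem, hg_ne⟩ := hμ.exists_hasEigenvector
    refine hc μ (WithLp.ofLp g) (by simpa using hg_ne) ?_
    simpa using congrArg WithLp.ofLp (mem_eigenspace_iff.1 hg_mem)
  simpa [EuclideanSpace.real_norm_sq_eq] using hT.norm_sq_apply_le hcT (WithLp.toLp 2 f)

theorem SimpleGraph.Connected.subsingleton_of_isRegularOfDegree_zero {V : Type*}
    {G : SimpleGraph V} [Fintype V] [DecidableRel G.Adj] (hconn : G.Connected)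
    (hreg : G.IsRegularOfDegree 0) : Subsingleton V := by
  have hbot : G = ⊥ := by
    ext x y
    simp only [SimpleGraph.bot_adj, iff_false]
    intro hxy
    have := hreg x
    rw [← SimpleGraph.card_neighborFinset_eq_degree, card_eq_zero] at this
    simpa [this] using (G.mem_neighborFinset x y).2 hxy
  exact (SimpleGraph.connected_bot_iff.1 (hbot ▸ hconn)).1

section BIPS

variable {V : Type*} [Fintype V] [DecidableEq V] {G : SimpleGraph V} [DecidableRel G.Adj]
  {r : ℕ}

theorem bipsStep_eq_prod (k : ℕ) (v : V) (A B : Finset V) :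
    bipsStep G r k v A B = ∏ u, if u ∈ B then Function.update (pInf G r k A) v 1 u
      else 1 - Function.update (pInf G r k A) v 1 u := by
  rw [bipsStep, ← mul_prod_erase univ _ (mem_univ v), Function.update_self]
  have hrest : ∀ u ∈ univ.erase v, (if u ∈ B then Function.update (pInf G r k A) v 1 u
      else 1 - Function.update (pInf G r k A) v 1 u) =
      if u ∈ B then pInf G r k A u else 1 - pInf G r k A u := fun u hu => by
    rw [Function.update_of_ne (ne_of_mem_erase hu)]
  rw [prod_congr rfl hrest]
  split_ifs <;> simp

theorem sum_bipsStep_mul_card (k : ℕ) (v : V) (A : Finset V) :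
    ∑ B, bipsStep G r k v A B * (B.card : ℝ) = ∑ u, Function.update (pInf G r k A) v 1 u := by
  simp_rw [bipsStep_eq_prod]
  exact Fintype.sum_prod_ite_mem_mul_card _

theorem degIn_le_degree (A : Finset V) (u : V) : degIn G A u ≤ G.degree u := by
  rw [degIn, ← SimpleGraph.card_neighborFinset_eq_degree]
  exact card_le_card inter_subset_left

theorem pInf_le_one (hreg : G.IsRegularOfDegree r) (k : ℕ) (A : Finset V) (u : V) :
    pInf G r k A u ≤ 1 := by
  have hdeg : (degIn G A u : ℝ) ≤ r := by
    exact_mod_cast hreg u ▸ degIn_le_degree A u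
  have hfrac : (degIn G A u : ℝ) / r ≤ 1 := div_le_one_of_le₀ hdeg r.cast_nonneg
  have := pow_nonneg (sub_nonneg.2 hfrac) k
  rw [pInf]
  linarith

theorem sum_pInf_le_sum_bipsStep_mul_card (hreg : G.IsRegularOfDegree r) (k : ℕ) (v : V)
    (A : Finset V) : ∑ u, pInf G r k A u ≤ ∑ B, bipsStep G r k v A B * (B.card : ℝ) := by
  rw [sum_bipsStep_mul_card]
  gcongr with u
  rcases eq_or_ne u v with rfl | huv
  · simpa using pInf_le_one hreg k A u
  · simp [Function.update_of_ne huv]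

end BIPS

section Spectral

variable {V : Type*} [Fintype V] {G : SimpleGraph V} [DecidableRel G.Adj] {r : ℕ}

variable (G r) in
theorem transMatrix_isHermitian : (transMatrix G r).IsHermitian := by
  ext x y
  simp [transMatrix, G.adj_comm]

variable (G r) in
theorem secondEigen_nonneg : 0 ≤ secondEigen G r :=
  Real.sSup_nonneg fun _ ⟨μ, _, hy, _⟩ => hy ▸ abs_nonneg μ

theorem abs_le_secondEigen {μ : ℝ} {f : V → ℝ} (hf : f ≠ 0) (hsum : ∑ x, f x = 0)
    (heig : transMatrix G r *ᵥ f = μ • f) : |μ| ≤ secondEigen G r := by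
  classical
  refine le_csSup ?_ ⟨μ, f, rfl, hf, hsum, heig⟩
  refine ((finite_hasEigenvalue (toLin' (transMatrix G r))).image abs).bddAbove.mono ?_
  rintro _ ⟨ν, g, rfl, hg, -, hν⟩
  exact ⟨ν, hasEigenvalue_of_hasEigenvector ⟨mem_eigenspace_iff.2 (by simpa using hν), hg⟩, rfl⟩

theorem sum_transMatrix_row (hreg : G.IsRegularOfDegree r) (hr : 0 < r) (x : V) :
    ∑ y, transMatrix G r x y = 1 := by
  simp [transMatrix, sum_ite, ← SimpleGraph.neighborFinset_eq_filter, hreg x, hr.ne']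

theorem sum_transMatrix_col (hreg : G.IsRegularOfDegree r) (hr : 0 < r) (y : V) :
    ∑ x, transMatrix G r x y = 1 := by
  simpa [transMatrix, G.adj_comm] using sum_transMatrix_row hreg hr y

theorem transMatrix_mulVec_const (hreg : G.IsRegularOfDegree r) (hr : 0 < r) (c : ℝ) :
    transMatrix G r *ᵥ (fun _ => c) = fun _ => c := by
  ext x
  simp [mulVec, dotProduct, ← sum_mul, sum_transMatrix_row hreg hr x]

theorem sum_transMatrix_mulVec (hreg : G.IsRegularOfDegree r) (hr : 0 < r) (f : V → ℝ) :
    ∑ x, (transMatrix G r *ᵥ f) x = ∑ x, f x := by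
  simp only [mulVec, dotProduct]
  rw [sum_comm]
  simp [← sum_mul, sum_transMatrix_col hreg hr]

theorem transMatrix_mulVec_indicator [DecidableEq V] (A : Finset V) :
    transMatrix G r *ᵥ (fun y => if y ∈ A then 1 else 0) = fun u => (degIn G A u : ℝ) / r := by
  ext u
  have hnbhd : ({x | x ∈ A ∧ G.Adj u x} : Finset V) = G.neighborFinset u ∩ A := by
    ext
    simp [and_comm]
  simp [mulVec, dotProduct, transMatrix, degIn, ← ite_and, sum_ite, hnbhd, div_eq_mul_inv]

theorem sum_sq_transMatrix_mulVec_le (hreg : G.IsRegularOfDegree r) (hr : 0 < r) {f : V → ℝ}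
    (hf : ∑ x, f x = 0) :
    ∑ x, (transMatrix G r *ᵥ f) x ^ 2 ≤ secondEigen G r ^ 2 * ∑ x, f x ^ 2 := by
  classical
  set n : ℝ := (Fintype.card V : ℝ)
  set Q : Matrix V V ℝ := transMatrix G r - of fun _ _ => n⁻¹
  have hQ : ∀ g, Q *ᵥ g = transMatrix G r *ᵥ g - Function.const V (n⁻¹ * ∑ x, g x) := by
    intro g
    ext x
    simp [Q, mulVec, dotProduct, sub_mul, sum_sub_distrib, mul_sum]
  have hQherm : Q.IsHermitian :=
    (transMatrix_isHermitian G r).sub (by ext; simp)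
  have hQeig : ∀ (μ : ℝ) (g : V → ℝ), g ≠ 0 → Q *ᵥ g = μ • g → |μ| ≤ secondEigen G r := by
    intro μ g hg heig
    rcases eq_or_ne μ 0 with rfl | hμ
    · simpa using secondEigen_nonneg G r
    have hn : n ≠ 0 := by
      obtain ⟨x, -⟩ := Function.ne_iff.1 hg
      have : Nonempty V := ⟨x⟩
      exact Nat.cast_ne_zero.2 Fintype.card_ne_zero
    have hsumQ : ∑ x, (Q *ᵥ g) x = 0 := by
      simp [hQ, sum_sub_distrib, sum_transMatrix_mulVec hreg hr, n, hn]
    have hsum : ∑ x, g x = 0 := by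
      simpa [heig, ← mul_sum, hμ] using hsumQ
    refine abs_le_secondEigen hg hsum ?_
    simpa [hQ, hsum] using heig
  simpa [hQ, hf] using hQherm.sum_sq_mulVec_le hQeig f

theorem sum_sq_transMatrix_mulVec_sub_le (hreg : G.IsRegularOfDegree r) (hr : 0 < r)
    (g : V → ℝ) :
    ∑ x, (transMatrix G r *ᵥ g) x ^ 2 - (∑ x, g x) ^ 2 / Fintype.card V ≤
      secondEigen G r ^ 2 * (∑ x, g x ^ 2 - (∑ x, g x) ^ 2 / Fintype.card V) := by
  set m := (∑ x, g x) / Fintype.card V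
  have hcentred : ∑ x, (g x - m) = 0 := by
    rcases isEmpty_or_nonempty V with hV | hV
    · simp
    · have : (Fintype.card V : ℝ) ≠ 0 := Nat.cast_ne_zero.2 Fintype.card_ne_zero
      simp [sum_sub_distrib, m, mul_div_cancel₀, this]
  have hmulVec :
      transMatrix G r *ᵥ (fun x => g x - m) = fun x => (transMatrix G r *ᵥ g) x - m := by
    rw [show (fun x => g x - m) = g - fun _ => m from rfl, mulVec_sub,
      transMatrix_mulVec_const hreg hr]
    rfl
  have hPg := sum_sq_sub_sum_div_card (transMatrix G r *ᵥ g)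
  rw [sum_transMatrix_mulVec hreg hr] at hPg
  have hcontract := sum_sq_transMatrix_mulVec_le hreg hr hcentred
  rw [hmulVec] at hcontract
  rw [← hPg, ← sum_sq_sub_sum_div_card g]
  exact hcontract

end Spectral

theorem card_mul_growth_le_sum_pInf {V : Type*} [Fintype V] [DecidableEq V] {G : SimpleGraph V}
    [DecidableRel G.Adj] {r : ℕ} (hreg : G.IsRegularOfDegree r) (hr : 0 < r) (A : Finset V) :
    (A.card : ℝ) * (1 + (1 - secondEigen G r ^ 2) * (1 - (A.card : ℝ) / Fintype.card V)) ≤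
      ∑ u, pInf G r 2 A u := by
  set d : V → ℝ := fun u => (degIn G A u : ℝ) / r
  have hind := transMatrix_mulVec_indicator (G := G) (r := r) A
  have hsum : ∑ u, d u = A.card := by
    simpa [hind] using sum_transMatrix_mulVec hreg hr (fun y => if y ∈ A then (1 : ℝ) else 0)
  have hvar : ∑ u, d u ^ 2 - (A.card : ℝ) ^ 2 / Fintype.card V ≤
      secondEigen G r ^ 2 * (A.card - (A.card : ℝ) ^ 2 / Fintype.card V) := by
    simpa [hind] using
      sum_sq_transMatrix_mulVec_sub_le hreg hr (fun y => if y ∈ A then (1 : ℝ) else 0)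
  have hpInf : ∀ u, pInf G r 2 A u = 2 * d u - d u ^ 2 := fun u => by
    simp only [pInf, d]
    ring
  calc (A.card : ℝ) * (1 + (1 - secondEigen G r ^ 2) * (1 - (A.card : ℝ) / Fintype.card V))
      = 2 * A.card - (A.card : ℝ) ^ 2 / Fintype.card V -
          secondEigen G r ^ 2 * (A.card - (A.card : ℝ) ^ 2 / Fintype.card V) := by ring
    _ ≤ 2 * A.card - ∑ u, d u ^ 2 := by linarith
    _ = ∑ u, pInf G r 2 A u := by simp only [hpInf, sum_sub_distrib, ← mul_sum, hsum]

theorem bips_expected_growth_general {V : Type*} [Fintype V] [DecidableEq V] (G : SimpleGraph V)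
    [DecidableRel G.Adj] (r : ℕ) (hconn : G.Connected) (hreg : G.IsRegularOfDegree r)
    (v : V) (A : Finset V) :
    (A.card : ℝ) *
        (1 + (1 - secondEigen G r ^ 2) * (1 - (A.card : ℝ) / (Fintype.card V : ℝ))) ≤
      ∑ B : Finset V, bipsStep G r 2 v A B * (B.card : ℝ) := by
  rcases Nat.eq_zero_or_pos r with rfl | hr
  · have := hconn.subsingleton_of_isRegularOfDegree_zero hreg
    have huniv : (univ : Finset V) = {v} :=
      eq_singleton_iff_unique_mem.2 ⟨mem_univ v, fun u _ => Subsingleton.elim u v⟩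
    have hcard : Fintype.card V = 1 := by rw [← card_univ, huniv, card_singleton]
    rw [sum_bipsStep_mul_card, Fintype.sum_subsingleton _ v, Function.update_self, hcard]
    rcases subset_singleton_iff.1 (huniv ▸ subset_univ A) with rfl | rfl <;> simp
  · exact (card_mul_growth_le_sum_pInf hreg hr A).trans
      (sum_pInf_le_sum_bipsStep_mul_card hreg 2 v A)

/-- Lemma 5 of the paper.  For a connected `r`-regular graph `G` on
`n` vertices with `λ < 1` and the BIPS process with source `v` and `k = 2`, for every
`A ⊆ V` with `v ∈ A`:  `E(|A_{t+1}| | A_t = A) ≥ |A|·(1 + (1-λ²)(1 - |A|/n))`. -/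
theorem bips_expected_growth {V : Type*} [Fintype V] [DecidableEq V] (G : SimpleGraph V)
    [DecidableRel G.Adj] (r : ℕ) (hconn : G.Connected) (hreg : G.IsRegularOfDegree r)
    (hlam : secondEigen G r < 1) (v : V) (A : Finset V) (hv : v ∈ A) :
    (A.card : ℝ) *
        (1 + (1 - secondEigen G r ^ 2) * (1 - (A.card : ℝ) / (Fintype.card V : ℝ))) ≤
      ∑ B : Finset V, bipsStep G r 2 v A B * (B.card : ℝ) :=
  bips_expected_growth_general G r hconn hreg v A
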